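/- Representer theorem: let H be a reproducing kernel Hilbert space on a set P with kernel k, let μ₁,…,μ_N ∈ P, y₁,…,y_N ∈ ℝ, and λ > 0. Then any minimizer f* ∈ H of L(f) = (1/N) Σ_{i=1}^N (y_i − f(μ_i))² + λ‖f‖²_H lies in span{k(·,μ_i) : i = 1,…,N}. -/

import Mathlib

open scoped RealInnerProductSpace

/-! Projecting `f` orthogonally onto the span `S` of the kernel translates does not change the
values `f(μᵢ) = ⟪f, k(·, μᵢ)⟫`, hence not the data-fit term, while it does not increase the norm.
So a minimizer `f` satisfies `‖f‖ ≤ ‖P_S f‖`, which forces `f ∈ S`. -/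

namespace Submodule

variable {H : Type*} [NormedAddCommGroup H] [InnerProductSpace ℝ H]

theorem inner_starProjection_eq_of_mem_right (S : Submodule ℝ H) [S.HasOrthogonalProjection]
    (f : H) {v : H} (hv : v ∈ S) : ⟪S.starProjection f, v⟫ = ⟪f, v⟫ := by
  rw [inner_starProjection_left_eq_right, starProjection_eq_self_iff.mpr hv]

theorem mem_of_forall_le_add_mul_norm_sq (S : Submodule ℝ H) [S.HasOrthogonalProjection]
    {Φ : H → ℝ} (hΦ : ∀ g, Φ (S.starProjection g) = Φ g) {lam : ℝ} (hlam : 0 < lam) {f : H}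
    (hmin : ∀ g, Φ f + lam * ‖f‖ ^ 2 ≤ Φ g + lam * ‖g‖ ^ 2) : f ∈ S := by
  have hle : lam * ‖f‖ ^ 2 ≤ lam * ‖S.starProjection f‖ ^ 2 := by
    simpa [hΦ] using hmin (S.starProjection f)
  have hge : ‖S.starProjection f‖ ≤ ‖f‖ := S.norm_starProjection_apply_le f
  rw [mem_iff_norm_starProjection]
  exact le_antisymm hge <| (pow_le_pow_iff_left₀ (norm_nonneg f) (norm_nonneg _) two_ne_zero).mp
    (le_of_mul_le_mul_left hle hlam)

end Submodule

/-- Functions in `H` are read on `P` through the evaluation map `e`, and the kernel translate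
`k(·, μ)` is `K μ`. -/
theorem stmt6_general {P H : Type*} [NormedAddCommGroup H] [InnerProductSpace ℝ H]
    (K : P → H) (e : H →ₗ[ℝ] (P → ℝ))
    (hrepr : ∀ (f : H) (p : P), e f p = ⟪f, K p⟫)
    (N : ℕ) (μ : Fin N → P) (y : Fin N → ℝ) (lam : ℝ) (hlam : 0 < lam)
    (L : H → ℝ)
    (hL : ∀ f, L f = (1/(N:ℝ)) * ∑ i, (y i - e f (μ i))^2 + lam * ‖f‖^2)
    (fstar : H) (hmin : ∀ g, L fstar ≤ L g) :
    fstar ∈ Submodule.span ℝ (Set.range fun i => K (μ i)) := by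
  set S := Submodule.span ℝ (Set.range fun i => K (μ i))
  have : FiniteDimensional ℝ S := FiniteDimensional.span_of_finite ℝ (Set.finite_range _)
  have heval (f : H) (i : Fin N) : e (S.starProjection f) (μ i) = e f (μ i) := by
    rw [hrepr, hrepr, S.inner_starProjection_eq_of_mem_right f (Submodule.subset_span ⟨i, rfl⟩)]
  refine S.mem_of_forall_le_add_mul_norm_sq
    (Φ := fun f => (1/(N:ℝ)) * ∑ i, (y i - e f (μ i))^2) (by simp only [heval, implies_true])
    hlam ?_
  simpa only [hL] using hmin

/-- Representer theorem: any minimizer of the regularized mean-squared-error loss in an RKHS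
lies in the span of the kernel translates at the data points. Here `H` is a Hilbert space of
functions on `P` (realized via the linear evaluation map `e`) with reproducing kernel given by
the feature map `K`, i.e. `k(·, μ) = K μ` and `f(μ) = ⟪f, K μ⟫`. -/
theorem stmt6 {P H : Type*} [NormedAddCommGroup H] [InnerProductSpace ℝ H] [CompleteSpace H]
    (K : P → H) (e : H →ₗ[ℝ] (P → ℝ))
    (hrepr : ∀ (f : H) (p : P), e f p = ⟪f, K p⟫)
    (N : ℕ) (μ : Fin N → P) (y : Fin N → ℝ) (lam : ℝ) (hlam : 0 < lam)
    (L : H → ℝ)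
    (hL : ∀ f, L f = (1/(N:ℝ)) * ∑ i, (y i - e f (μ i))^2 + lam * ‖f‖^2)
    (fstar : H) (hmin : ∀ g, L fstar ≤ L g) :
    fstar ∈ Submodule.span ℝ (Set.range fun i => K (μ i)) :=
  stmt6_general K e hrepr N μ y lam hlam L hL fstar hmin
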